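/- Let $\Omega \subset \mathbb{R}^d$ ($d \in \{1,2,3\}$) be compact and $f : \Omega \times \mathbb{R}^3 \to [0,\infty)$ with $f \in L^2(\Omega\times\mathbb{R}^3)$ and $\int_{\mathbb{R}^3} f(\cdot,v)(1+|v|^2)\,dv \in L^2(\Omega)$. Suppose for every compact $C \subset \mathbb{R}^3$ and every $\delta > 0$ there exists a function $f_\theta \in L^2(\Omega \times C)$ with $\|f - f_\theta\|_{L^2(\Omega\times C)} < \delta$ (extended by zero outside $C$). Then for every $\epsilon > 0$ there exists such an approximant $f_\theta$ (supported in some $\Omega \times C$) with both $\|f - f_\theta\|_{L^2(\Omega\times\mathbb{R}^3)} < \epsilon$ and $\left\|\int_{\mathbb{R}^3}(f - f_\theta)(\cdot,v)(1+|v|^2)\,dv\right\|_{L^2(\Omega)} < \epsilon$. -/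

import Mathlib

/-!
The velocity tails of `f` in `L²(Ω × ℝ³)` and of its moment `∫ f (1 + |v|²) dv` in `L²(Ω)`
both vanish as the ball `|v| ≤ n` grows, by dominated convergence. Fix `n` making both tails
smaller than `ε / 2`, and approximate `f` on `Ω × B_n` to accuracy `δ`. Off the ball the error
is just the tail of `f`; on the ball, Cauchy–Schwarz in `v` bounds the moment error by
`‖1 + |v|²‖_{L²(B_n)} · δ`, so a small enough `δ` does it.
-/

open MeasureTheory ENNReal Filter Set Topology

namespace MeasureTheory

variable {α β E : Type*} [MeasurableSpace α] [MeasurableSpace β] [NormedAddCommGroup E]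
  {μ : Measure α} {ν : Measure β} {p : ℝ≥0∞}

theorem tendsto_eLpNorm_zero_of_dominated {F : ℕ → α → E} {G : α → ℝ} (hp : p ≠ ∞)
    (hF : ∀ n, AEStronglyMeasurable (F n) μ) (hG : MemLp G p μ)
    (hbound : ∀ n, ∀ᵐ x ∂μ, ‖F n x‖ ≤ G x)
    (hlim : ∀ᵐ x ∂μ, Tendsto (fun n => F n x) atTop (𝓝 0)) :
    Tendsto (fun n => eLpNorm (F n) p μ) atTop (𝓝 0) := by
  rcases eq_or_ne p 0 with rfl | hp0
  · simp
  simp_rw [eLpNorm_eq_lintegral_rpow_enorm_toReal hp0 hp]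
  have hp_pos : 0 < p.toReal := ENNReal.toReal_pos hp0 hp
  have hint : Tendsto (fun n => ∫⁻ x, ‖F n x‖ₑ ^ p.toReal ∂μ) atTop (𝓝 0) := by
    simpa using tendsto_lintegral_of_dominated_convergence' (f := fun _ => 0)
      (fun x => ‖G x‖ₑ ^ p.toReal) (fun n => (hF n).enorm.pow_const _)
      (fun n => (hbound n).mono fun x hx => ENNReal.rpow_le_rpow
        (enorm_le_iff_norm_le.2 (hx.trans (Real.le_norm_self _))) hp_pos.le)
      (lintegral_rpow_enorm_lt_top_of_eLpNorm_lt_top hp0 hp hG.2).ne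
      (hlim.mono fun x hx => by
        simpa [ENNReal.zero_rpow_of_pos hp_pos] using hx.enorm.ennrpow_const p.toReal)
  simpa [ENNReal.zero_rpow_of_pos (inv_pos.2 hp_pos)] using hint.ennrpow_const p.toReal⁻¹

theorem MemLp.tendsto_eLpNorm_restrict {g : α → E} (hg : MemLp g p μ) (hp : p ≠ ∞)
    {s : ℕ → Set α} (hs : ∀ n, MeasurableSet (s n))
    (hlim : ∀ x, ∀ᶠ n in atTop, x ∉ s n) :
    Tendsto (fun n => eLpNorm g p (μ.restrict (s n))) atTop (𝓝 0) := by
  simp_rw [← eLpNorm_indicator_eq_eLpNorm_restrict (hs _)]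
  refine tendsto_eLpNorm_zero_of_dominated hp (fun n => hg.1.indicator (hs n)) hg.norm
    (fun n => ae_of_all _ fun x => norm_indicator_le_norm_self _ _) (ae_of_all _ fun x => ?_)
  exact tendsto_const_nhds.congr' ((hlim x).mono fun n hn => (indicator_of_notMem hn _).symm)

theorem Integrable.tendsto_setIntegral {g : β → ℝ} (hg : Integrable g ν) {s : ℕ → Set β}
    (hs : ∀ n, MeasurableSet (s n)) (hlim : ∀ y, ∀ᶠ n in atTop, y ∉ s n) :
    Tendsto (fun n => ∫ y in s n, g y ∂ν) atTop (𝓝 0) := by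
  refine tendsto_zero_iff_enorm_tendsto_zero.2 <| tendsto_of_tendsto_of_tendsto_of_le_of_le
    tendsto_const_nhds
    ((memLp_one_iff_integrable.2 hg).tendsto_eLpNorm_restrict one_ne_top hs hlim)
    (fun _ => bot_le) (fun n => ?_)
  rw [eLpNorm_one_eq_lintegral_enorm]
  exact enorm_integral_le_lintegral_enorm _

theorem Measure.prod_restrict_right [SFinite μ] [SFinite ν] (t : Set β) :
    μ.prod (ν.restrict t) = (μ.prod ν).restrict (Prod.snd ⁻¹' t) := by
  simpa [univ_prod] using Measure.prod_restrict (μ := μ) univ t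

theorem MemLp.tendsto_eLpNorm_setIntegral [SFinite μ] [SFinite ν] {g : α × β → ℝ}
    (hM : MemLp (fun x => ∫ y, ‖g (x, y)‖ ∂ν) p μ) (hp : p ≠ ∞)
    (hg : AEStronglyMeasurable g (μ.prod ν))
    (hint : ∀ᵐ x ∂μ, Integrable (fun y => g (x, y)) ν) {s : ℕ → Set β}
    (hs : ∀ n, MeasurableSet (s n)) (hlim : ∀ y, ∀ᶠ n in atTop, y ∉ s n) :
    Tendsto (fun n => eLpNorm (fun x => ∫ y in s n, g (x, y) ∂ν) p μ) atTop (𝓝 0) := by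
  refine tendsto_eLpNorm_zero_of_dominated hp (fun n => ?_) hM (fun n => ?_) ?_
  · exact (hg.mono_ac (.prod .rfl Measure.absolutelyContinuous_restrict)).integral_prod_right'
  · filter_upwards [hint] with x hx
    exact (norm_integral_le_integral_norm _).trans
      (setIntegral_le_integral hx.norm (ae_of_all _ fun _ => norm_nonneg _))
  · filter_upwards [hint] with x hx
    exact hx.tendsto_setIntegral hs hlim

theorem MemLp.exists_tails_lt [SFinite μ] [SFinite ν] {f : α × β → ℝ} {w : β → ℝ}
    (hf : MemLp f p (μ.prod ν)) (hp : p ≠ ∞) (hw : AEStronglyMeasurable w ν)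
    (hfw : ∀ᵐ x ∂μ, Integrable (fun y => f (x, y) * w y) ν)
    (hM : MemLp (fun x => ∫ y, ‖f (x, y) * w y‖ ∂ν) p μ) {s : ℕ → Set β}
    (hs : ∀ n, MeasurableSet (s n)) (hlim : ∀ y, ∀ᶠ n in atTop, y ∈ s n) {η : ℝ≥0∞}
    (hη : 0 < η) :
    ∃ n, eLpNorm f p (μ.prod (ν.restrict (s n)ᶜ)) < η ∧
      eLpNorm (fun x => ∫ y in (s n)ᶜ, f (x, y) * w y ∂ν) p μ < η := by
  have hlim' : ∀ y, ∀ᶠ n in atTop, y ∉ (s n)ᶜ := fun y =>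
    (hlim y).mono fun _ hn => not_not_intro hn
  have htail := hf.tendsto_eLpNorm_restrict hp (fun n => measurable_snd (hs n).compl)
    fun z => hlim' z.2
  simp_rw [← Measure.prod_restrict_right] at htail
  have hmoment := hM.tendsto_eLpNorm_setIntegral hp (hf.1.mul hw.comp_snd) hfw
    (fun n => (hs n).compl) hlim'
  exact ((htail.eventually (gt_mem_nhds hη)).and (hmoment.eventually (gt_mem_nhds hη))).exists

theorem eLpNorm_rpow_toReal_eq_lintegral (f : α → E) (hp0 : p ≠ 0) (hp : p ≠ ∞) :
    eLpNorm f p μ ^ p.toReal = ∫⁻ x, ‖f x‖ₑ ^ p.toReal ∂μ := by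
  rw [eLpNorm_eq_lintegral_rpow_enorm_toReal hp0 hp, ← ENNReal.rpow_mul,
    one_div_mul_cancel (ENNReal.toReal_pos hp0 hp).ne', ENNReal.rpow_one]

theorem eLpNorm_add_measure_le (f : α → E) (μ' : Measure α) (hp : 1 ≤ p)
    (hp_top : p ≠ ∞) :
    eLpNorm f p (μ + μ') ≤ eLpNorm f p μ + eLpNorm f p μ' := by
  have hp0 : p ≠ 0 := (zero_lt_one.trans_le hp).ne'
  have hp_pos : 0 < p.toReal := ENNReal.toReal_pos hp0 hp_top
  simp_rw [eLpNorm_eq_lintegral_rpow_enorm_toReal hp0 hp_top, lintegral_add_measure]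
  refine ENNReal.rpow_add_le_add_rpow _ _ (by positivity) ?_
  rw [one_div]
  exact inv_le_one_of_one_le₀ (by simpa using ENNReal.toReal_mono hp_top hp)

theorem MemLp.ae_memLp_prodMk_left [SFinite ν] {g : α × β → E} (hg : MemLp g p (μ.prod ν))
    (hp0 : p ≠ 0) (hp : p ≠ ∞) : ∀ᵐ x ∂μ, MemLp (fun y => g (x, y)) p ν := by
  have hfin : ∫⁻ x, ∫⁻ y, ‖g (x, y)‖ₑ ^ p.toReal ∂ν ∂μ < ∞ := by
    rw [← lintegral_prod _ (hg.1.enorm.pow_const _)]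
    exact lintegral_rpow_enorm_lt_top_of_eLpNorm_lt_top hp0 hp hg.2
  filter_upwards [hg.1.prodMk_left,
    ae_lt_top' (hg.1.enorm.pow_const _).lintegral_prod_right' hfin.ne] with x hmeas hx
  exact ⟨hmeas, (eLpNorm_lt_top_iff_lintegral_rpow_enorm_lt_top hp0 hp).2 hx⟩

theorem eLpNorm_integral_mul_le [SFinite ν] {q : ℝ≥0∞} [p.HolderConjugate q] (hp : p ≠ ∞)
    {g : α × β → ℝ} {ψ : β → ℝ} (hg : AEStronglyMeasurable g (μ.prod ν))
    (hψ : AEStronglyMeasurable ψ ν) :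
    eLpNorm (fun x => ∫ y, g (x, y) * ψ y ∂ν) p μ ≤
      eLpNorm ψ q ν * eLpNorm g p (μ.prod ν) := by
  have hp0 : p ≠ 0 := (zero_lt_one.trans_le (ENNReal.HolderConjugate.one_le p q)).ne'
  have hp_pos : 0 < p.toReal := ENNReal.toReal_pos hp0 hp
  have hholder : ∀ᵐ x ∂μ, ‖∫ y, g (x, y) * ψ y ∂ν‖ₑ ≤
      eLpNorm (fun y => g (x, y)) p ν * eLpNorm ψ q ν := by
    filter_upwards [hg.prodMk_left] with x hx
    calc ‖∫ y, g (x, y) * ψ y ∂ν‖ₑ ≤ eLpNorm (fun y => g (x, y) * ψ y) 1 ν := by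
          rw [eLpNorm_one_eq_lintegral_enorm]; exact enorm_integral_le_lintegral_enorm _
      _ ≤ _ := by
          simpa using eLpNorm_le_eLpNorm_mul_eLpNorm'_of_norm hx hψ (· * ·) 1
            (ae_of_all _ fun y => by simp [norm_mul])
  rw [← ENNReal.rpow_le_rpow_iff hp_pos, ENNReal.mul_rpow_of_nonneg _ _ hp_pos.le]
  calc eLpNorm (fun x => ∫ y, g (x, y) * ψ y ∂ν) p μ ^ p.toReal
      = ∫⁻ x, ‖∫ y, g (x, y) * ψ y ∂ν‖ₑ ^ p.toReal ∂μ :=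
        eLpNorm_rpow_toReal_eq_lintegral _ hp0 hp
    _ ≤ ∫⁻ x, (eLpNorm (fun y => g (x, y)) p ν * eLpNorm ψ q ν) ^ p.toReal ∂μ :=
        lintegral_mono_ae (hholder.mono fun x hx => ENNReal.rpow_le_rpow hx hp_pos.le)
    _ = eLpNorm ψ q ν ^ p.toReal * ∫⁻ x, ∫⁻ y, ‖g (x, y)‖ₑ ^ p.toReal ∂ν ∂μ := by
        simp_rw [ENNReal.mul_rpow_of_nonneg _ _ hp_pos.le,
          eLpNorm_rpow_toReal_eq_lintegral _ hp0 hp, mul_comm _ (eLpNorm ψ q ν ^ p.toReal)]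
        exact lintegral_const_mul'' _ (hg.enorm.pow_const _).lintegral_prod_right'
    _ = eLpNorm ψ q ν ^ p.toReal * eLpNorm g p (μ.prod ν) ^ p.toReal := by
        rw [eLpNorm_rpow_toReal_eq_lintegral _ hp0 hp, lintegral_prod _ (hg.enorm.pow_const _)]

theorem eLpNorm_sub_le_of_forall_notMem_eq_zero [SFinite μ] [SFinite ν] (hp : 1 ≤ p)
    (hp_top : p ≠ ∞) {C : Set β} (hC : MeasurableSet C) (f fθ : α × β → E)
    (hzero : ∀ x y, y ∉ C → fθ (x, y) = 0) :
    eLpNorm (fun z => f z - fθ z) p (μ.prod ν) ≤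
      eLpNorm (fun z => f z - fθ z) p (μ.prod (ν.restrict C)) +
        eLpNorm f p (μ.prod (ν.restrict Cᶜ)) := by
  have hoff : ∀ᵐ z ∂μ.prod (ν.restrict Cᶜ), f z - fθ z = f z := by
    rw [Measure.prod_restrict_right]
    filter_upwards [ae_restrict_mem (measurable_snd hC.compl)] with z hz
    rw [hzero z.1 z.2 hz, sub_zero]
  calc eLpNorm (fun z => f z - fθ z) p (μ.prod ν)
      = eLpNorm (fun z => f z - fθ z) p
          (μ.prod (ν.restrict C) + μ.prod (ν.restrict Cᶜ)) := by
        rw [← Measure.prod_add, Measure.restrict_add_restrict_compl hC]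
    _ ≤ _ := eLpNorm_add_measure_le _ _ hp hp_top
    _ = _ := by rw [eLpNorm_congr_ae hoff]

theorem eLpNorm_integral_sub_mul_le [SFinite μ] [SFinite ν] {q : ℝ≥0∞}
    [p.HolderConjugate q] (hp : p ≠ ∞) {C : Set β} (hC : MeasurableSet C)
    {f fθ : α × β → ℝ} {w : β → ℝ} (hf : AEStronglyMeasurable f (μ.prod ν))
    (hw : AEStronglyMeasurable w ν) (hwC : MemLp w q (ν.restrict C))
    (hfw : ∀ᵐ x ∂μ, Integrable (fun y => f (x, y) * w y) ν)
    (hθ : MemLp fθ p (μ.prod (ν.restrict C))) (hzero : ∀ x y, y ∉ C → fθ (x, y) = 0) :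
    eLpNorm (fun x => ∫ y, (f (x, y) - fθ (x, y)) * w y ∂ν) p μ ≤
      eLpNorm (fun x => ∫ y in Cᶜ, f (x, y) * w y ∂ν) p μ +
        eLpNorm w q (ν.restrict C) *
          eLpNorm (fun z => f z - fθ z) p (μ.prod (ν.restrict C)) := by
  have hp1 : 1 ≤ p := ENNReal.HolderConjugate.one_le p q
  have hsplit : (fun x => ∫ y, (f (x, y) - fθ (x, y)) * w y ∂ν) =ᵐ[μ] fun x =>
      (∫ y in Cᶜ, f (x, y) * w y ∂ν) + ∫ y in C, (f (x, y) - fθ (x, y)) * w y ∂ν := by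
    filter_upwards [hfw, hθ.ae_memLp_prodMk_left (zero_lt_one.trans_le hp1).ne' hp]
      with x hfx hθx
    have hθw : Integrable (fun y => fθ (x, y) * w y) ν :=
      IntegrableOn.integrable_of_forall_notMem_eq_zero (hθx.integrable_mul hwC) fun y hy => by
        simp [hzero x y hy]
    have hdiff : Integrable (fun y => (f (x, y) - fθ (x, y)) * w y) ν := by
      simp only [sub_mul]
      exact hfx.sub hθw
    rw [← integral_add_compl hC hdiff, add_comm]
    congr 1
    exact setIntegral_congr_fun hC.compl fun y hy => by simp [hzero x y hy]
  have hac : ∀ t, μ.prod (ν.restrict t) ≪ μ.prod ν := fun t =>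
    .prod .rfl Measure.absolutelyContinuous_restrict
  have hdiff : AEStronglyMeasurable (fun z => f z - fθ z) (μ.prod (ν.restrict C)) :=
    (hf.mono_ac (hac C)).sub hθ.1
  rw [eLpNorm_congr_ae hsplit]
  refine (eLpNorm_add_le ?_ ?_ hp1).trans (add_le_add le_rfl ?_)
  · exact ((hf.mul hw.comp_snd).mono_ac (hac _)).integral_prod_right'
  · exact AEStronglyMeasurable.integral_prod_right' (f := fun z => (f z - fθ z) * w z.2)
      (hdiff.mul (hw.restrict (s := C)).comp_snd)
  · exact eLpNorm_integral_mul_le (ν := ν.restrict C) (g := fun z => f z - fθ z) hp hdiff hwC.1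

end MeasureTheory

theorem Continuous.memLp_restrict_of_isCompact {β E : Type*} [MeasurableSpace β]
    [TopologicalSpace β] [OpensMeasurableSpace β] [T2Space β] [NormedAddCommGroup E]
    [SecondCountableTopologyEither β E] {ν : Measure β} [IsFiniteMeasureOnCompacts ν]
    {p : ℝ≥0∞} {w : β → E} (hw : Continuous w) {C : Set β} (hC : IsCompact C) :
    MemLp w p (ν.restrict C) := by
  have : IsFiniteMeasure (ν.restrict C) := isFiniteMeasure_restrict.2 hC.measure_lt_top.ne
  obtain ⟨M, hM⟩ := hC.exists_bound_of_continuousOn hw.continuousOn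
  exact .of_bound hw.aestronglyMeasurable.restrict M
    ((ae_restrict_iff' hC.measurableSet).2 (ae_of_all _ hM))

theorem ENNReal.exists_pos_ofReal_lt_and_mul_ofReal_lt {K η : ℝ≥0∞} (hK : K ≠ ∞)
    (hη : 0 < η) : ∃ δ > 0, ENNReal.ofReal δ < η ∧ K * ENNReal.ofReal δ < η := by
  have h : Tendsto ENNReal.ofReal (𝓝[>] 0) (𝓝 0) := by
    simpa using (ENNReal.continuous_ofReal.tendsto 0).mono_left nhdsWithin_le_nhds
  have hK' : Tendsto (fun δ => K * ENNReal.ofReal δ) (𝓝[>] 0) (𝓝 0) := by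
    simpa using ENNReal.Tendsto.const_mul h (Or.inr hK)
  obtain ⟨δ, ⟨h₁, h₂⟩, hδ⟩ :=
    (((h.eventually (gt_mem_nhds hη)).and (hK'.eventually (gt_mem_nhds hη))).and
      self_mem_nhdsWithin).exists
  exact ⟨δ, hδ, h₁, h₂⟩

theorem uat_particle_density_general (d : ℕ)
    (Ω : Set (EuclideanSpace ℝ (Fin d)))
    (f : EuclideanSpace ℝ (Fin d) × EuclideanSpace ℝ (Fin 3) → ℝ)
    (hfnonneg : ∀ x v, 0 ≤ f (x, v))
    (hfL2 : MemLp f 2 ((volume.restrict Ω).prod volume))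
    (hint : ∀ x, Integrable (fun v => f (x, v) * (1 + ‖v‖ ^ 2)))
    (hM : MemLp (fun x => ∫ v, f (x, v) * (1 + ‖v‖ ^ 2)) 2 (volume.restrict Ω))
    (happrox : ∀ C : Set (EuclideanSpace ℝ (Fin 3)), IsCompact C → ∀ δ > (0 : ℝ),
      ∃ fθ : EuclideanSpace ℝ (Fin d) × EuclideanSpace ℝ (Fin 3) → ℝ,
        (∀ x v, v ∉ C → fθ (x, v) = 0) ∧
        MemLp fθ 2 ((volume.restrict Ω).prod (volume.restrict C)) ∧
        eLpNorm (fun p => f p - fθ p) 2 ((volume.restrict Ω).prod (volume.restrict C)) <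
          ENNReal.ofReal δ) :
    ∀ ε > (0 : ℝ),
      ∃ (C : Set (EuclideanSpace ℝ (Fin 3)))
        (fθ : EuclideanSpace ℝ (Fin d) × EuclideanSpace ℝ (Fin 3) → ℝ),
        IsCompact C ∧ (∀ x v, v ∉ C → fθ (x, v) = 0) ∧
        eLpNorm (fun p => f p - fθ p) 2 ((volume.restrict Ω).prod volume) <
          ENNReal.ofReal ε ∧
        eLpNorm (fun x => ∫ v, (f (x, v) - fθ (x, v)) * (1 + ‖v‖ ^ 2)) 2
          (volume.restrict Ω) < ENNReal.ofReal ε := by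
  intro ε hε
  have hw : Continuous fun v : EuclideanSpace ℝ (Fin 3) => 1 + ‖v‖ ^ 2 := by fun_prop
  have hmoment : MemLp (fun x => ∫ v, ‖f (x, v) * (1 + ‖v‖ ^ 2)‖) 2 (volume.restrict Ω) := by
    convert hM using 4 with x v
    exact Real.norm_of_nonneg (mul_nonneg (hfnonneg x v) (by positivity))
  have hball (v : EuclideanSpace ℝ (Fin 3)) : ∀ᶠ n : ℕ in atTop, v ∈ Metric.closedBall 0 n :=
    (tendsto_natCast_atTop_atTop.eventually_ge_atTop ‖v‖).mono fun n hn => by simpa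
  have hη : 0 < ENNReal.ofReal ε / 2 := ENNReal.half_pos (ENNReal.ofReal_pos.2 hε).ne'
  obtain ⟨n, hn₁, hn₂⟩ := hfL2.exists_tails_lt ofNat_ne_top hw.aestronglyMeasurable
    (ae_of_all _ hint) hmoment (fun _ => measurableSet_closedBall) hball hη
  have hwB := hw.memLp_restrict_of_isCompact (ν := volume) (p := 2) (isCompact_closedBall 0 n)
  obtain ⟨δ, hδ, hδε, hKδ⟩ := ENNReal.exists_pos_ofReal_lt_and_mul_ofReal_lt hwB.2.ne hη
  obtain ⟨fθ, hzero, hθ, hclose⟩ := happrox _ (isCompact_closedBall 0 n) δ hδ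
  refine ⟨_, fθ, isCompact_closedBall 0 n, hzero, ?_, ?_⟩
  · calc _ ≤ _ := eLpNorm_sub_le_of_forall_notMem_eq_zero one_le_two ofNat_ne_top
          measurableSet_closedBall f fθ hzero
      _ < ENNReal.ofReal ε / 2 + ENNReal.ofReal ε / 2 :=
          ENNReal.add_lt_add (hclose.trans hδε) hn₁
      _ = _ := ENNReal.add_halves _
  · calc _ ≤ _ := eLpNorm_integral_sub_mul_le (q := 2) ofNat_ne_top measurableSet_closedBall
          hfL2.1 hw.aestronglyMeasurable hwB (ae_of_all _ hint) hθ hzero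
      _ < ENNReal.ofReal ε / 2 + ENNReal.ofReal ε / 2 :=
          ENNReal.add_lt_add hn₂ (lt_of_le_of_lt (by gcongr) hKδ)
      _ = _ := ENNReal.add_halves _

/-- Universal approximation theorem for particle density functions (Theorem 3.2):
simultaneous L² approximation on the full velocity domain and of the weighted
velocity moments, given density of approximants on compact velocity truncations. -/
theorem uat_particle_density (d : ℕ) (hd : d ∈ ({1, 2, 3} : Set ℕ))
    (Ω : Set (EuclideanSpace ℝ (Fin d))) (hΩ : IsCompact Ω)
    (f : EuclideanSpace ℝ (Fin d) × EuclideanSpace ℝ (Fin 3) → ℝ)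
    (hfnonneg : ∀ x v, 0 ≤ f (x, v))
    (hfL2 : MemLp f 2 ((volume.restrict Ω).prod volume))
    (hint : ∀ x, Integrable (fun v => f (x, v) * (1 + ‖v‖ ^ 2)))
    (hM : MemLp (fun x => ∫ v, f (x, v) * (1 + ‖v‖ ^ 2)) 2 (volume.restrict Ω))
    (happrox : ∀ C : Set (EuclideanSpace ℝ (Fin 3)), IsCompact C → ∀ δ > (0 : ℝ),
      ∃ fθ : EuclideanSpace ℝ (Fin d) × EuclideanSpace ℝ (Fin 3) → ℝ,
        (∀ x v, v ∉ C → fθ (x, v) = 0) ∧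
        MemLp fθ 2 ((volume.restrict Ω).prod (volume.restrict C)) ∧
        eLpNorm (fun p => f p - fθ p) 2 ((volume.restrict Ω).prod (volume.restrict C)) <
          ENNReal.ofReal δ) :
    ∀ ε > (0 : ℝ),
      ∃ (C : Set (EuclideanSpace ℝ (Fin 3)))
        (fθ : EuclideanSpace ℝ (Fin d) × EuclideanSpace ℝ (Fin 3) → ℝ),
        IsCompact C ∧ (∀ x v, v ∉ C → fθ (x, v) = 0) ∧
        eLpNorm (fun p => f p - fθ p) 2 ((volume.restrict Ω).prod volume) <
          ENNReal.ofReal ε ∧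
        eLpNorm (fun x => ∫ v, (f (x, v) - fθ (x, v)) * (1 + ‖v‖ ^ 2)) 2
          (volume.restrict Ω) < ENNReal.ofReal ε :=
  uat_particle_density_general d Ω f hfnonneg hfL2 hint hM happrox
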